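/- arXiv:2003.00599 — 4 statements merged into one kernel-verified Lean document; each statement's English description precedes it below -/
import Mathlib

section
/- Let γ_1, …, γ_m be points in ℝ^n. Suppose (μ*, t*) with μ* ≥ 0, t* ∈ ℝ^n satisfies ‖μ* • γ_j + t*‖ = 1 for all j, and the vectors n_j := μ* • γ_j + t* satisfy: for every v ∈ ℝ^n there exists j with ⟨v, n_j⟩ ≤ 0. Then for every (μ, t) with μ ≥ 0 and ‖μ • γ_j + t‖ = 1 for all j, one has μ ≤ μ*. -/
open scoped RealInnerProductSpace

theorem stmt1 {n m : ℕ} (γ : Fin m → EuclideanSpace ℝ (Fin n))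
    (μstar : ℝ) (tstar : EuclideanSpace ℝ (Fin n))
    (hμstar : 0 ≤ μstar)
    (hunit : ∀ j, ‖μstar • γ j + tstar‖ = 1)
    (hpos : ∀ v : EuclideanSpace ℝ (Fin n), ∃ j, ⟪v, μstar • γ j + tstar⟫ ≤ 0) :
    ∀ (μ : ℝ) (t : EuclideanSpace ℝ (Fin n)),
      0 ≤ μ → (∀ j, ‖μ • γ j + t‖ = 1) → μ ≤ μstar := by
  intro μ t hμ hunit'
  by_contra h
  push_neg at h
  obtain ⟨j, hj⟩ := hpos (μ • tstar - μstar • t)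
  set N := μstar • γ j + tstar with hN
  set P := μ • γ j + t with hP
  have hn : ‖N‖ = 1 := hunit j
  have hp : ‖P‖ = 1 := hunit' j
  have hv : μ • tstar - μstar • t = μ • N - μstar • P := by
    rw [hN, hP]; module
  rw [hv] at hj
  have h1 : ⟪μ • N - μstar • P, N⟫ = μ * ‖N‖ ^ 2 - μstar * ⟪P, N⟫ := by
    rw [inner_sub_left, real_inner_smul_left, real_inner_smul_left,
      real_inner_self_eq_norm_sq]
  have hPN : ⟪P, N⟫ ≤ 1 := by
    calc ⟪P, N⟫ ≤ ‖P‖ * ‖N‖ := real_inner_le_norm P N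
    _ = 1 := by rw [hp, hn]; ring
  rw [h1, hn] at hj
  nlinarith
end

section
/- Let F_1, …, F_m be facets of a full-dimensional convex polytope T ⊂ ℝ^n, contained in supporting hyperplanes H_j = {x : ⟨u_j, x⟩ = b_j} with T ⊆ {x : ⟨u_j, x⟩ ≤ b_j}, where u_j are outer unit normals. Suppose p = (p_1,…,p_m) and p′ = (p′_1,…,p′_m) are closed polygonal lines with p_j, p′_j ∈ F_j, and there exist unit vectors n_1, …, n_m (the same for both) with p_{j+1} − p_j = λ_j n_j and p′_{j+1} − p′_j = λ′_j n_j for some λ_j, λ′_j > 0, and with n_{j+1} − n_j a nonpositive multiple of u_{j+1} for all j (indices mod m). Then the total lengths agree: Σ_j ‖p_{j+1} − p_j‖ = Σ_j ‖p′_{j+1} − p′_j‖. -/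
open scoped RealInnerProductSpace

/-- Proposition 6.3: two closed regular billiard trajectories bouncing (in order) on the same
facets of a polytope, with the same direction vectors `n_j`, have the same length. -/
theorem stmt13 {n m : ℕ} [NeZero m] (T : Set (EuclideanSpace ℝ (Fin n))) (hT : Convex ℝ T)
    (u : Fin m → EuclideanSpace ℝ (Fin n)) (b : Fin m → ℝ)
    (huunit : ∀ j, ‖u j‖ = 1)
    (hsupp : ∀ j, T ⊆ {x | ⟪u j, x⟫ ≤ b j})
    (F : Fin m → Set (EuclideanSpace ℝ (Fin n)))
    (hF : ∀ j, F j = T ∩ {x | ⟪u j, x⟫ = b j})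
    (p p' : Fin m → EuclideanSpace ℝ (Fin n))
    (hp : ∀ j, p j ∈ F j) (hp' : ∀ j, p' j ∈ F j)
    (nv : Fin m → EuclideanSpace ℝ (Fin n)) (hnunit : ∀ j, ‖nv j‖ = 1)
    (lam lam' : Fin m → ℝ) (hlam : ∀ j, 0 < lam j) (hlam' : ∀ j, 0 < lam' j)
    (hrec : ∀ j, p (j + 1) - p j = lam j • nv j)
    (hrec' : ∀ j, p' (j + 1) - p' j = lam' j • nv j)
    (hnorm : ∀ j, ∃ μ : ℝ, μ ≤ 0 ∧ nv (j + 1) - nv j = μ • u (j + 1)) :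
    ∑ j, ‖p (j + 1) - p j‖ = ∑ j, ‖p' (j + 1) - p' j‖ := by
  set μ : Fin m → ℝ := fun j => (hnorm j).choose with hμ
  have hμspec : ∀ j, nv (j + 1) - nv j = μ j • u (j + 1) := fun j => (hnorm j).choose_spec.2
  have hb : ∀ j, ⟪u j, p j⟫ = b j := fun j => ((hF j ▸ hp j).2 : _)
  have hb' : ∀ j, ⟪u j, p' j⟫ = b j := fun j => ((hF j ▸ hp' j).2 : _)
  have hdiff : ∀ j : Fin m, nv (j - 1) - nv j = (-(μ (j - 1))) • u j := by
    intro j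
    have := hμspec (j - 1)
    rw [sub_add_cancel] at this
    have h2 : nv (j - 1) - nv j = -(nv j - nv (j - 1)) := by abel
    rw [h2, this, neg_smul]
  have habel : ∀ q : Fin m → EuclideanSpace ℝ (Fin n), (∀ j, ⟪u j, q j⟫ = b j) →
      ∑ j, ⟪nv j, q (j + 1) - q j⟫ = ∑ j, (-(μ (j - 1))) * b j := by
    intro q hq
    have h1 : ∑ j, ⟪nv j, q (j + 1)⟫ = ∑ j, ⟪nv (j - 1), q j⟫ := by
      apply Fintype.sum_equiv (Equiv.addRight (1 : Fin m))
      intro j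
      simp [add_sub_cancel_right]
    calc ∑ j, ⟪nv j, q (j + 1) - q j⟫
        = ∑ j, (⟪nv j, q (j + 1)⟫ - ⟪nv j, q j⟫) := by
          simp [inner_sub_right]
      _ = (∑ j, ⟪nv j, q (j + 1)⟫) - ∑ j, ⟪nv j, q j⟫ := by
          rw [Finset.sum_sub_distrib]
      _ = (∑ j, ⟪nv (j - 1), q j⟫) - ∑ j, ⟪nv j, q j⟫ := by rw [h1]
      _ = ∑ j, ⟪nv (j - 1) - nv j, q j⟫ := by
          rw [← Finset.sum_sub_distrib]; simp [inner_sub_left]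
      _ = ∑ j, (-(μ (j - 1))) * b j := by
          refine Finset.sum_congr rfl fun j _ => ?_
          rw [hdiff j, real_inner_smul_left, hq j]
  have hlen : ∀ (r : Fin m → EuclideanSpace ℝ (Fin n)) (l : Fin m → ℝ), (∀ j, 0 < l j) →
      (∀ j, r (j + 1) - r j = l j • nv j) →
      ∑ j, ‖r (j + 1) - r j‖ = ∑ j, ⟪nv j, r (j + 1) - r j⟫ := by
    intro r l hl hr
    refine Finset.sum_congr rfl fun j _ => ?_
    rw [hr j, norm_smul, real_inner_smul_right, real_inner_self_eq_norm_sq, hnunit j]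
    simp [abs_of_pos (hl j)]
  rw [hlen p lam hlam hrec, hlen p' lam' hlam' hrec', habel p hb, habel p' hb']
end

section
/- Let p_1, …, p_m be points in ℝ^n and n_1, …, n_m unit vectors satisfying p_{j+1} − p_j = λ_j n_j with λ_j > 0 and n_{j+1} − n_j = −μ_{j+1} n_{j+1}' with μ_{j+1} > 0 for unit vectors n_j' (indices mod m). Then for each j, the point p_j minimizes the function x ↦ ‖x − p_{j−1}‖ + ‖p_{j+1} − x‖ over the hyperplane H_j = {x : ⟨n_j', x − p_j⟩ = 0}. -/
open scoped RealInnerProductSpace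

/-- One direction of Proposition 2.3: if the closed polygonal line `p` satisfies the
system `p_{j+1} − p_j = λ_j n_j`, `n_{j+1} − n_j = −μ_{j+1} n'_{j+1}` with positive
coefficients and unit vectors, then each `p_j` minimizes
`x ↦ ‖x − p_{j−1}‖ + ‖p_{j+1} − x‖` over the hyperplane through `p_j` normal to `n'_j`. -/
theorem stmt17 {d m : ℕ} [NeZero m]
    (p nv np : Fin m → EuclideanSpace ℝ (Fin d))
    (hnunit : ∀ j, ‖nv j‖ = 1) (hnpunit : ∀ j, ‖np j‖ = 1)
    (lam : Fin m → ℝ) (hlam : ∀ j, 0 < lam j)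
    (hrec : ∀ j, p (j + 1) - p j = lam j • nv j)
    (μ : Fin m → ℝ) (hμ : ∀ j, 0 < μ j)
    (hnrec : ∀ j, nv (j + 1) - nv j = -(μ (j + 1)) • np (j + 1)) :
    ∀ j, ∀ x : EuclideanSpace ℝ (Fin d), ⟪np j, x - p j⟫ = 0 →
      ‖p j - p (j - 1)‖ + ‖p (j + 1) - p j‖ ≤ ‖x - p (j - 1)‖ + ‖p (j + 1) - x‖ := by
  intro j x hx
  have hj1 : (j - 1) + 1 = j := sub_add_cancel j 1
  have h1 : p j - p (j - 1) = lam (j - 1) • nv (j - 1) := by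
    have := hrec (j - 1); rwa [hj1] at this
  have h2 := hrec j
  have hn : nv (j - 1) - nv j = μ j • np j := by
    have h := hnrec (j - 1)
    rw [hj1, neg_smul] at h
    rw [← neg_sub, h, neg_neg]
  have e1 : ‖p j - p (j - 1)‖ = lam (j - 1) := by
    rw [h1, norm_smul, hnunit, mul_one, Real.norm_eq_abs, abs_of_pos (hlam _)]
  have e2 : ‖p (j + 1) - p j‖ = lam j := by
    rw [h2, norm_smul, hnunit, mul_one, Real.norm_eq_abs, abs_of_pos (hlam _)]
  have hz : ⟪nv (j - 1), x - p j⟫ - ⟪nv j, x - p j⟫ = 0 := by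
    rw [← inner_sub_left, hn, real_inner_smul_left, hx, mul_zero]
  have hsplit : x - p (j - 1) = (x - p j) + lam (j - 1) • nv (j - 1) := by
    rw [← h1]; abel
  have hsplit2 : p (j + 1) - x = lam j • nv j + -(x - p j) := by
    rw [neg_sub]
    rw [show lam j • nv j = p (j+1) - p j from h2.symm]; abel
  have key : ⟪nv (j - 1), x - p (j - 1)⟫ + ⟪nv j, p (j + 1) - x⟫
      = lam (j - 1) + lam j := by
    rw [hsplit, hsplit2, inner_add_right, inner_add_right, real_inner_smul_right,
      real_inner_smul_right, inner_neg_right, real_inner_self_eq_norm_sq,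
      real_inner_self_eq_norm_sq, hnunit, hnunit]
    simp only [one_pow, mul_one]
    linarith [hz]
  have c1 : ⟪nv (j - 1), x - p (j - 1)⟫ ≤ ‖x - p (j - 1)‖ := by
    have := real_inner_le_norm (nv (j - 1)) (x - p (j - 1))
    rwa [hnunit, one_mul] at this
  have c2 : ⟪nv j, p (j + 1) - x⟫ ≤ ‖p (j + 1) - x‖ := by
    have := real_inner_le_norm (nv j) (p (j + 1) - x)
    rwa [hnunit, one_mul] at this
  rw [e1, e2]
  linarith
end

section
/- Let u, v be unit vectors with u ≠ v and u ≠ −v. Then w := u/‖u‖ − v = u − v is nonzero, and if a point p minimizes x ↦ ‖x − a‖ + ‖b − x‖ over a hyperplane H through p with (p − a)/‖p − a‖ = u and (b − p)/‖b − p‖ = v, then the angle between the incoming direction u and H equals the angle between the outgoing direction v and H (equivalently, v = u − 2⟨u, ν⟩ν where ν is the unit normal to H). -/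
/-!
At a minimizer `p` of `x ↦ ‖x - a‖ + ‖b - x‖` on the hyperplane `ν ⟂ (x - p)`, the derivative of
the path length along every direction `h` of the hyperplane vanishes; this derivative is
`⟪u - v, h⟫`, so `u - v` is orthogonal to the hyperplane, i.e. `u - v = c • ν`. Expanding
`‖v‖² = ‖u - c • ν‖²` with `‖u‖ = ‖v‖` gives `c (c - 2⟪u, ν⟫) = 0`, and `c ≠ 0` because `u ≠ v`.
-/

open scoped RealInnerProductSpace

section FirstVariation

variable {E : Type*} [NormedAddCommGroup E] [InnerProductSpace ℝ E]

theorem hasDerivAt_norm_add_smul {y : E} (h : E) (hy : y ≠ 0) :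
    HasDerivAt (fun t : ℝ => ‖y + t • h‖) ⟪‖y‖⁻¹ • y, h⟫ 0 := by
  have hline : HasDerivAt (fun t : ℝ => y + t • h) h 0 := by
    simpa using ((hasDerivAt_id (0 : ℝ)).smul_const h).const_add y
  have hy' : ‖y‖ ≠ 0 := norm_ne_zero_iff.mpr hy
  have hsqrt := hline.norm_sq.sqrt (by simpa using pow_ne_zero 2 hy')
  simp only [Real.sqrt_sq (norm_nonneg _), zero_smul, add_zero] at hsqrt
  convert hsqrt using 1
  rw [real_inner_smul_left]
  field_simp

theorem inner_normalize_sub_normalize_eq_zero_of_forall_le {a b p : E} (h : E)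
    (hap : p ≠ a) (hpb : b ≠ p)
    (hmin : ∀ t : ℝ, ‖p - a‖ + ‖b - p‖ ≤ ‖p + t • h - a‖ + ‖b - (p + t • h)‖) :
    ⟪‖p - a‖⁻¹ • (p - a) - ‖b - p‖⁻¹ • (b - p), h⟫ = 0 := by
  have hderiv := (hasDerivAt_norm_add_smul h (sub_ne_zero.mpr hap)).add
    (hasDerivAt_norm_add_smul (-h) (sub_ne_zero.mpr hpb))
  have hlocal : IsLocalMin (fun t : ℝ => ‖p - a + t • h‖ + ‖b - p + t • -h‖) 0 :=
    Filter.Eventually.of_forall fun t => by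
      have e₁ : p + t • h - a = p - a + t • h := by abel
      have e₂ : b - (p + t • h) = b - p + t • -h := by rw [smul_neg]; abel
      simpa [e₁, e₂] using hmin t
  have := hlocal.hasDerivAt_eq_zero hderiv
  rwa [inner_neg_right, ← sub_eq_add_neg, ← inner_sub_left] at this

end FirstVariation

theorem exists_smul_eq_of_forall_inner_eq_zero {𝕜 E : Type*} [RCLike 𝕜] [NormedAddCommGroup E]
    [InnerProductSpace 𝕜 E] {ν w : E} (hw : ∀ h : E, inner 𝕜 ν h = 0 → inner 𝕜 w h = 0) :
    ∃ c : 𝕜, c • ν = w := by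
  rw [← Submodule.mem_span_singleton, ← Submodule.orthogonal_orthogonal (𝕜 ∙ ν),
    Submodule.mem_orthogonal]
  intro h hh
  rw [Submodule.mem_orthogonal_singleton_iff_inner_right] at hh
  rw [← inner_conj_symm, hw h hh, map_zero]

theorem eq_sub_two_inner_smul_of_sub_eq_smul {E : Type*} [NormedAddCommGroup E]
    [InnerProductSpace ℝ E] {u v ν : E} {c : ℝ} (hnorm : ‖u‖ = ‖v‖) (huv : u ≠ v)
    (hν : ‖ν‖ = 1) (hc : u - v = c • ν) :
    v = u - (2 * ⟪u, ν⟫) • ν := by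
  have hv : v = u - c • ν := by rw [← hc, sub_sub_cancel]
  have hc0 : c ≠ 0 := by
    rintro rfl
    exact huv (sub_eq_zero.mp (by simpa using hc))
  have hexpand : ‖v‖ ^ 2 = ‖u‖ ^ 2 - 2 * c * ⟪u, ν⟫ + c ^ 2 := by
    rw [hv, norm_sub_sq_real, norm_smul, real_inner_smul_right, hν, Real.norm_eq_abs, mul_one, sq_abs]
    ring
  have : c * (c - 2 * ⟪u, ν⟫) = 0 := by rw [hnorm] at hexpand; linarith
  rw [hv, sub_eq_zero.mp ((mul_eq_zero.mp this).resolve_left hc0)]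

theorem stmt19_general {d : ℕ} (a b p u v ν : EuclideanSpace ℝ (Fin d))
    (hap : p ≠ a) (hpb : b ≠ p)
    (hu : u = ‖p - a‖⁻¹ • (p - a)) (hv : v = ‖b - p‖⁻¹ • (b - p))
    (huunit : ‖u‖ = 1) (hvunit : ‖v‖ = 1)
    (huv : u ≠ v)
    (hνunit : ‖ν‖ = 1)
    (hmin : ∀ x : EuclideanSpace ℝ (Fin d), ⟪ν, x - p⟫ = 0 →
      ‖p - a‖ + ‖b - p‖ ≤ ‖x - a‖ + ‖b - x‖) :
    u - v ≠ 0 ∧ v = u - (2 * ⟪u, ν⟫) • ν := by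
  have hnormal : ∀ h, ⟪ν, h⟫ = 0 → ⟪u - v, h⟫ = 0 := fun h hh => by
    rw [hu, hv]
    refine inner_normalize_sub_normalize_eq_zero_of_forall_le h hap hpb fun t => hmin _ ?_
    simp [inner_smul_right, hh]
  obtain ⟨c, hc⟩ := exists_smul_eq_of_forall_inner_eq_zero hnormal
  exact ⟨sub_ne_zero.mpr huv,
    eq_sub_two_inner_smul_of_sub_eq_smul (huunit.trans hvunit.symm) huv hνunit hc.symm⟩

/-- Law of reflection from the least action principle: with incoming unit direction
`u = (p−a)/‖p−a‖` and outgoing unit direction `v = (b−p)/‖b−p‖`, `u ≠ v`, `u ≠ −v`,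
if `p` minimizes `x ↦ ‖x − a‖ + ‖b − x‖` over the hyperplane through `p` with unit normal
`ν`, then `u − v ≠ 0` and `v = u − 2⟨u,ν⟩ν` (angle of incidence equals angle of
reflection). -/
theorem stmt19 {d : ℕ} (a b p u v ν : EuclideanSpace ℝ (Fin d))
    (hap : p ≠ a) (hpb : b ≠ p)
    (hu : u = ‖p - a‖⁻¹ • (p - a)) (hv : v = ‖b - p‖⁻¹ • (b - p))
    (huunit : ‖u‖ = 1) (hvunit : ‖v‖ = 1)
    (huv : u ≠ v) (huv' : u ≠ -v)
    (hνunit : ‖ν‖ = 1)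
    (hmin : ∀ x : EuclideanSpace ℝ (Fin d), ⟪ν, x - p⟫ = 0 →
      ‖p - a‖ + ‖b - p‖ ≤ ‖x - a‖ + ‖b - x‖) :
    u - v ≠ 0 ∧ v = u - (2 * ⟪u, ν⟫) • ν :=
  stmt19_general a b p u v ν hap hpb hu hv huunit hvunit huv hνunit hmin
end
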